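/- arXiv:quant-ph/0603173 — 4 statements merged into one kernel-verified Lean document; each statement's English description precedes it below -/
import Mathlib

section
/- If there is a (d, δ₀, δ₁)-threshold embedding of a Boolean function f (unit vectors α_x, β_y ∈ ℝ^d with |⟨α_x, β_y⟩|² ≤ δ₀ when f(x,y)=0 and |⟨α_x, β_y⟩|² ≥ δ₁ when f(x,y)=1), then there is a (d²+1)-dimensional realization of f with margin γ = (δ₁-δ₀)/(2+δ₁+δ₀), i.e., unit vectors α'_x, β'_y ∈ ℝ^{d²+1} with ⟨α'_x, β'_y⟩ ≥ γ when f(x,y)=0 and ⟨α'_x, β'_y⟩ ≤ -γ when f(x,y)=1. -/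
theorem tensor_sum_aux (d : ℕ) (E : Fin d × Fin d ≃ Fin (d ^ 2))
    (u v w z : Fin d → ℝ) :
    (∑ k : Fin (d ^ 2), (u (E.symm k).1 * v (E.symm k).2) * (w (E.symm k).1 * z (E.symm k).2))
      = (∑ i, u i * w i) * (∑ j, v j * z j) := by
  rw [Equiv.sum_comp E.symm (fun p : Fin d × Fin d => (u p.1 * v p.2) * (w p.1 * z p.2)),
    Fintype.sum_prod_type, Finset.sum_mul_sum]
  apply Finset.sum_congr rfl; intro i _
  apply Finset.sum_congr rfl; intro j _
  ring

theorem stmt0 {X Y : Type} [Fintype X] [Fintype Y] (f : X → Y → Bool)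
    (d : ℕ) (δ0 δ1 : ℝ) (hδ0 : 0 ≤ δ0) (hδ : δ0 < δ1) (hδ1 : δ1 ≤ 1)
    (α : X → EuclideanSpace ℝ (Fin d)) (β : Y → EuclideanSpace ℝ (Fin d))
    (hα : ∀ x, ‖α x‖ = 1) (hβ : ∀ y, ‖β y‖ = 1)
    (h0 : ∀ x y, f x y = false → (inner ℝ (α x) (β y) : ℝ) ^ 2 ≤ δ0)
    (h1 : ∀ x y, f x y = true → δ1 ≤ (inner ℝ (α x) (β y) : ℝ) ^ 2) :
    ∃ (α' : X → EuclideanSpace ℝ (Fin (d ^ 2 + 1)))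
      (β' : Y → EuclideanSpace ℝ (Fin (d ^ 2 + 1))),
      (∀ x, ‖α' x‖ = 1) ∧ (∀ y, ‖β' y‖ = 1) ∧
      (∀ x y, f x y = false →
        (δ1 - δ0) / (2 + δ1 + δ0) ≤ (inner ℝ (α' x) (β' y) : ℝ)) ∧
      (∀ x y, f x y = true →
        (inner ℝ (α' x) (β' y) : ℝ) ≤ -((δ1 - δ0) / (2 + δ1 + δ0))) := by
  have hden : (0:ℝ) < 2 + δ1 + δ0 := by linarith
  set a : ℝ := (δ1 + δ0) / (2 + δ1 + δ0) with ha_def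
  have ha0 : 0 ≤ a := by apply div_nonneg <;> linarith
  have h1a : 1 - a = 2 / (2 + δ1 + δ0) := by
    rw [ha_def, eq_div_iff hden.ne', sub_mul, div_mul_cancel₀ _ hden.ne']; ring
  have h1a0 : 0 ≤ 1 - a := by rw [h1a]; positivity
  obtain ⟨r, hr⟩ : ∃ r : ℝ, r * r = a := ⟨Real.sqrt a, Real.mul_self_sqrt ha0⟩
  obtain ⟨s, hs⟩ : ∃ s : ℝ, s * s = 1 - a := ⟨Real.sqrt (1 - a), Real.mul_self_sqrt h1a0⟩
  set E : Fin d × Fin d ≃ Fin (d ^ 2) := finProdFinEquiv.trans (finCongr (pow_two d).symm) with hE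
  set A : X → EuclideanSpace ℝ (Fin (d ^ 2 + 1)) := fun x =>
    WithLp.toLp 2 (Fin.cons r (fun k => s * (α x (E.symm k).1 * α x (E.symm k).2))) with hA
  set B : Y → EuclideanSpace ℝ (Fin (d ^ 2 + 1)) := fun y =>
    WithLp.toLp 2 (Fin.cons r (fun k => -(s * (β y (E.symm k).1 * β y (E.symm k).2)))) with hB
  have inner_eq : ∀ (n : ℕ) (u v : EuclideanSpace ℝ (Fin n)),
      (inner ℝ u v : ℝ) = ∑ i, u i * v i := by
    intro n u v
    simp [PiLp.inner_apply, RCLike.inner_apply, conj_trivial, mul_comm]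
  have norm_sum : ∀ (u : EuclideanSpace ℝ (Fin d)), ‖u‖ = 1 → ∑ i, u i * u i = 1 := by
    intro u h
    have := real_inner_self_eq_norm_sq u
    rw [inner_eq, h] at this
    simpa using this
  have key : ∀ x y, (inner ℝ (A x) (B y) : ℝ) = a - (1 - a) * (inner ℝ (α x) (β y) : ℝ) ^ 2 := by
    intro x y
    rw [show (inner ℝ (A x) (B y) : ℝ) = ∑ i, A x i * B y i from inner_eq _ _ _]
    simp only [hA, hB, PiLp.toLp_apply, Fin.sum_univ_succ, Fin.cons_zero, Fin.cons_succ]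
    have step : ∀ k : Fin (d ^ 2),
        (s * (α x (E.symm k).1 * α x (E.symm k).2)) *
          (-(s * (β y (E.symm k).1 * β y (E.symm k).2)))
        = -((1 - a) * ((α x (E.symm k).1 * β y (E.symm k).2) *
            (β y (E.symm k).1 * α x (E.symm k).2))) := by
      intro k; rw [← hs]; ring
    rw [Finset.sum_congr rfl (fun k _ => step k), Finset.sum_neg_distrib,
      ← Finset.mul_sum, tensor_sum_aux d E (α x) (β y) (β y) (α x), hr, inner_eq]
    rw [show (∑ i, α x i * β y i) * (∑ j, β y j * α x j) = (∑ i, α x i * β y i) ^ 2 from by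
      rw [Finset.sum_congr rfl (fun j _ => mul_comm (β y j) (α x j))]; ring]
    ring
  have selfkey : ∀ (c : ℝ), c * c = a → ∀ (u : EuclideanSpace ℝ (Fin d)), ‖u‖ = 1 →
      ∀ (w : EuclideanSpace ℝ (Fin (d ^ 2 + 1))),
      w = WithLp.toLp 2 (Fin.cons c (fun k => s * (u (E.symm k).1 * u (E.symm k).2))) → ‖w‖ = 1 := by
    intro c hc u hu w hw
    have h2 : (inner ℝ w w : ℝ) = 1 := by
      rw [inner_eq _ w w, hw]
      simp only [PiLp.toLp_apply, Fin.sum_univ_succ, Fin.cons_zero, Fin.cons_succ]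
      have step : ∀ k : Fin (d ^ 2),
          (s * (u (E.symm k).1 * u (E.symm k).2)) * (s * (u (E.symm k).1 * u (E.symm k).2))
          = (1 - a) * ((u (E.symm k).1 * u (E.symm k).2) * (u (E.symm k).1 * u (E.symm k).2)) := by
        intro k; rw [← hs]; ring
      rw [Finset.sum_congr rfl (fun k _ => step k), ← Finset.mul_sum,
        tensor_sum_aux d E u u u u, norm_sum u hu, hc]
      ring
    have h3 := real_inner_self_eq_norm_sq w
    rw [h2] at h3
    nlinarith [norm_nonneg w]
  have keyA : ∀ x, ‖A x‖ = 1 := fun x => selfkey r hr (α x) (hα x) (A x) rfl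
  have keyB : ∀ y, ‖B y‖ = 1 := by
    intro y
    have hneg : B y = -(WithLp.toLp 2 (Fin.cons (-r) (fun k => s * (β y (E.symm k).1 * β y (E.symm k).2)))) := by
      rw [hB]
      ext i
      refine Fin.cases ?_ (fun j => ?_) i <;> simp
    rw [hneg, norm_neg]
    exact selfkey (-r) (by rw [neg_mul_neg, hr]) (β y) (hβ y) _ rfl
  refine ⟨A, B, keyA, keyB, ?_, ?_⟩
  · intro x y hf
    have ht := h0 x y hf
    rw [key]
    have hγ : (δ1 - δ0) / (2 + δ1 + δ0) = a - (1 - a) * δ0 := by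
      rw [ha_def, h1a]; field_simp; ring
    rw [hγ]
    nlinarith
  · intro x y hf
    have ht := h1 x y hf
    rw [key]
    have hγ : -((δ1 - δ0) / (2 + δ1 + δ0)) = a - (1 - a) * δ1 := by
      rw [ha_def, h1a]; field_simp; ring
    rw [hγ]
    nlinarith
end

section
/- If there is a d-dimensional realization of a Boolean function f with margin γ ∈ (0,1], then there is a (d+1, δ₀, δ₁)-threshold embedding of f with δ₀ = (1-γ)²/4 and δ₁ = (1+γ)²/4. -/
noncomputable def extVec {d : ℕ} (c : ℝ) (v : EuclideanSpace ℝ (Fin d)) :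
    EuclideanSpace ℝ (Fin (d + 1)) :=
  WithLp.toLp 2 (Fin.cons ((Real.sqrt 2)⁻¹) (fun j => c * v j * (Real.sqrt 2)⁻¹))

lemma extVec_inner {d : ℕ} (c c' : ℝ) (v w : EuclideanSpace ℝ (Fin d)) :
    (inner ℝ (extVec c v) (extVec c' w) : ℝ)
      = (1 + c * c' * (inner ℝ v w : ℝ)) / 2 := by
  simp only [PiLp.inner_apply, RCLike.inner_apply', starRingEnd_apply, star_trivial]
  rw [Fin.sum_univ_succ]
  simp only [extVec, PiLp.toLp_apply, Fin.cons_zero, Fin.cons_succ]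
  have h2 : (Real.sqrt 2)⁻¹ * (Real.sqrt 2)⁻¹ = 1 / 2 := by
    rw [← mul_inv]
    rw [← Real.sqrt_mul_self (by norm_num : (0:ℝ) ≤ 2)]
    norm_num
  have : ∀ j : Fin d, c * v j * (Real.sqrt 2)⁻¹ * (c' * w j * (Real.sqrt 2)⁻¹)
      = (c * c' / 2) * (v j * w j) := by
    intro j; rw [show c * v j * (Real.sqrt 2)⁻¹ * (c' * w j * (Real.sqrt 2)⁻¹)
      = (c * c') * (v j * w j) * ((Real.sqrt 2)⁻¹ * (Real.sqrt 2)⁻¹) by ring, h2]; ring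
  rw [Finset.sum_congr rfl (fun j _ => this j), ← Finset.mul_sum]
  rw [h2]
  ring

lemma extVec_norm {d : ℕ} (c : ℝ) (hc : c = 1 ∨ c = -1)
    (v : EuclideanSpace ℝ (Fin d)) (hv : ‖v‖ = 1) : ‖extVec c v‖ = 1 := by
  have h : (inner ℝ (extVec c v) (extVec c v) : ℝ) = 1 := by
    rw [extVec_inner, real_inner_self_eq_norm_sq, hv]
    rcases hc with h | h <;> rw [h] <;> norm_num
  have := real_inner_self_eq_norm_sq (extVec c v)
  nlinarith [norm_nonneg (extVec c v)]

theorem stmt1 {X Y : Type} [Fintype X] [Fintype Y] (f : X → Y → Bool)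
    (d : ℕ) (γ : ℝ) (hγ0 : 0 < γ) (hγ1 : γ ≤ 1)
    (α : X → EuclideanSpace ℝ (Fin d)) (β : Y → EuclideanSpace ℝ (Fin d))
    (hα : ∀ x, ‖α x‖ = 1) (hβ : ∀ y, ‖β y‖ = 1)
    (h0 : ∀ x y, f x y = false → γ ≤ (inner ℝ (α x) (β y) : ℝ))
    (h1 : ∀ x y, f x y = true → (inner ℝ (α x) (β y) : ℝ) ≤ -γ) :
    ∃ (α' : X → EuclideanSpace ℝ (Fin (d + 1)))
      (β' : Y → EuclideanSpace ℝ (Fin (d + 1))),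
      (∀ x, ‖α' x‖ = 1) ∧ (∀ y, ‖β' y‖ = 1) ∧
      (∀ x y, f x y = false →
        (inner ℝ (α' x) (β' y) : ℝ) ^ 2 ≤ (1 - γ) ^ 2 / 4) ∧
      (∀ x y, f x y = true →
        (1 + γ) ^ 2 / 4 ≤ (inner ℝ (α' x) (β' y) : ℝ) ^ 2) := by
  refine ⟨fun x => extVec 1 (α x), fun y => extVec (-1) (β y),
    fun x => extVec_norm 1 (Or.inl rfl) _ (hα x),
    fun y => extVec_norm (-1) (Or.inr rfl) _ (hβ y), ?_, ?_⟩ <;>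
  · intro x y hf
    have hcs : |(inner ℝ (α x) (β y) : ℝ)| ≤ 1 := by
      have := abs_real_inner_le_norm (α x) (β y)
      rwa [hα, hβ, mul_one] at this
    rw [abs_le] at hcs
    rw [extVec_inner]
    first
    | (have := h0 x y hf; nlinarith [hcs.1, hcs.2])
    | (have := h1 x y hf; nlinarith [hcs.1, hcs.2])
end

section
/- Let M ∈ {-1,1}^{X×Y} be a sign matrix and suppose unit vectors α_x, β_y ∈ ℝ^d satisfy M(x,y)·⟨α_x, β_y⟩ ≥ γ for all x, y (a realization with margin γ). Then γ ≤ ‖M‖ / √(|X|·|Y|), where ‖M‖ is the operator (spectral) norm of M. -/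
theorem stmt11 {X Y : Type} [Fintype X] [Fintype Y] [DecidableEq X] [DecidableEq Y]
    [Nonempty X] [Nonempty Y]
    (M : Matrix X Y ℝ) (hM : ∀ x y, M x y = 1 ∨ M x y = -1)
    (d : ℕ) (γ : ℝ) (hγ : 0 < γ)
    (α : X → EuclideanSpace ℝ (Fin d)) (β : Y → EuclideanSpace ℝ (Fin d))
    (hα : ∀ x, ‖α x‖ = 1) (hβ : ∀ y, ‖β y‖ = 1)
    (hmargin : ∀ x y, γ ≤ M x y * (inner ℝ (α x) (β y) : ℝ)) :
    γ ≤ ‖LinearMap.toContinuousLinearMap (Matrix.toEuclideanLin M)‖ /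
        Real.sqrt (Fintype.card X * Fintype.card Y) := by
  set N := LinearMap.toContinuousLinearMap (Matrix.toEuclideanLin M) with hN
  set cX : ℝ := (Fintype.card X : ℝ) with hcXdef
  set cY : ℝ := (Fintype.card Y : ℝ) with hcYdef
  have hcX : 0 < cX := by positivity
  have hcY : 0 < cY := by positivity
  -- component vectors
  set a : Fin d → EuclideanSpace ℝ X := fun k => (WithLp.equiv 2 (X → ℝ)).symm (fun x => α x k)
  set b : Fin d → EuclideanSpace ℝ Y := fun k => (WithLp.equiv 2 (Y → ℝ)).symm (fun y => β y k)
  set S : ℝ := ∑ k : Fin d, (inner ℝ (a k) (N (b k)) : ℝ) with hS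
  -- lower bound
  have hS1 : S = ∑ x : X, ∑ y : Y, M x y * (inner ℝ (α x) (β y) : ℝ) := by
    have : S = ∑ k : Fin d, ∑ x : X, α x k * ∑ y : Y, M x y * β y k := by
      apply Finset.sum_congr rfl
      intro k _
      rw [PiLp.inner_apply]
      apply Finset.sum_congr rfl
      intro x _
      simp [a, b, N, Matrix.toEuclideanLin_apply, Matrix.mulVec, dotProduct,
        RCLike.inner_apply, mul_comm]
    rw [this]
    rw [Finset.sum_comm]
    apply Finset.sum_congr rfl
    intro x _
    simp_rw [Finset.mul_sum, Finset.sum_comm (s := Finset.univ (α := Fin d)), PiLp.inner_apply,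
      RCLike.inner_apply, starRingEnd_apply, star_trivial, Finset.mul_sum]
    apply Finset.sum_congr rfl
    intro y _
    apply Finset.sum_congr rfl
    intro k _
    ring
  have hlow : γ * (cX * cY) ≤ S := by
    rw [hS1]
    calc γ * (cX * cY) = ∑ _x : X, ∑ _y : Y, γ := by
          simp [cX, cY, Finset.sum_const, nsmul_eq_mul]; ring
      _ ≤ _ := by
          apply Finset.sum_le_sum
          intro x _
          exact Finset.sum_le_sum fun y _ => hmargin x y
  -- norms of component vectors
  have hna : ∑ k : Fin d, ‖a k‖ ^ 2 = cX := by
    have : ∀ k, ‖a k‖ ^ 2 = ∑ x : X, (α x k) ^ 2 := by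
      intro k
      rw [← real_inner_self_eq_norm_sq, PiLp.inner_apply]
      simp [a, RCLike.inner_apply, sq]
    simp_rw [this]
    rw [Finset.sum_comm]
    have : ∀ x : X, ∑ k : Fin d, (α x k) ^ 2 = 1 := by
      intro x
      have := real_inner_self_eq_norm_sq (α x)
      rw [hα x] at this
      rw [PiLp.inner_apply] at this
      simpa [RCLike.inner_apply, sq] using this
    simp [this, cX]
  have hnb : ∑ k : Fin d, ‖b k‖ ^ 2 = cY := by
    have : ∀ k, ‖b k‖ ^ 2 = ∑ y : Y, (β y k) ^ 2 := by
      intro k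
      rw [← real_inner_self_eq_norm_sq, PiLp.inner_apply]
      simp [b, RCLike.inner_apply, sq]
    simp_rw [this]
    rw [Finset.sum_comm]
    have : ∀ y : Y, ∑ k : Fin d, (β y k) ^ 2 = 1 := by
      intro y
      have := real_inner_self_eq_norm_sq (β y)
      rw [hβ y] at this
      rw [PiLp.inner_apply] at this
      simpa [RCLike.inner_apply, sq] using this
    simp [this, cY]
  -- upper bound
  have hup : S ≤ ‖N‖ * (Real.sqrt cX * Real.sqrt cY) := by
    have h1 : S ≤ ∑ k : Fin d, ‖N‖ * (‖a k‖ * ‖b k‖) := by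
      apply Finset.sum_le_sum
      intro k _
      calc (inner ℝ (a k) (N (b k)) : ℝ) ≤ ‖a k‖ * ‖N (b k)‖ := real_inner_le_norm _ _
        _ ≤ ‖a k‖ * (‖N‖ * ‖b k‖) := by
            apply mul_le_mul_of_nonneg_left (N.le_opNorm _) (norm_nonneg _)
        _ = ‖N‖ * (‖a k‖ * ‖b k‖) := by ring
    rw [← Finset.mul_sum] at h1
    refine h1.trans ?_
    apply mul_le_mul_of_nonneg_left _ (norm_nonneg N)
    calc ∑ k : Fin d, ‖a k‖ * ‖b k‖
        ≤ Real.sqrt (∑ k : Fin d, ‖a k‖ ^ 2) * Real.sqrt (∑ k : Fin d, ‖b k‖ ^ 2) :=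
          Real.sum_mul_le_sqrt_mul_sqrt _ _ _
      _ = Real.sqrt cX * Real.sqrt cY := by rw [hna, hnb]
  -- conclude
  have hsq : Real.sqrt (cX * cY) = Real.sqrt cX * Real.sqrt cY := Real.sqrt_mul hcX.le _
  have hs : 0 < Real.sqrt (cX * cY) := Real.sqrt_pos.2 (by positivity)
  rw [le_div_iff₀ hs]
  have hcc : cX * cY = Real.sqrt (cX * cY) * Real.sqrt (cX * cY) :=
    (Real.mul_self_sqrt (by positivity)).symm
  have := hlow.trans hup
  rw [← hsq] at this
  nlinarith [hs, this, hcc]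
end

section
/- Every realization of the n-bit inner product function IP(x,y) = ⟨x,y⟩ mod 2 by unit vectors (in any dimension) has margin γ ≤ 2^{-n/2}. -/
noncomputable def chi (a : ZMod 2) : ℝ := (-1 : ℝ) ^ a.val

lemma chi_zero : chi 0 = 1 := by simp [chi]

lemma zmod2_cases : ∀ a b : ZMod 2, a + b = 0 ↔ a = b := by decide

lemma chi_add (a b : ZMod 2) : chi (a + b) = chi a * chi b := by
  have h : ∀ a b : ZMod 2, (a + b).val = (a.val + b.val) % 2 := by decide
  rw [chi, chi, chi, h, ← neg_one_pow_eq_pow_mod_two, pow_add]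

lemma chi_mul_self (a : ZMod 2) : chi a * chi a = 1 := by
  fin_cases a <;>
    norm_num [chi, show ZMod.val (0 : ZMod 2) = 0 from rfl,
      show ZMod.val (1 : ZMod 2) = 1 from rfl, ZMod.val]

lemma chi_sum {ι : Type*} (s : Finset ι) (f : ι → ZMod 2) :
    chi (∑ i ∈ s, f i) = ∏ i ∈ s, chi (f i) := by
  classical
  induction s using Finset.induction_on with
  | empty => simp [chi_zero]
  | insert a s ha ih => rw [Finset.sum_insert ha, Finset.prod_insert ha, chi_add, ih]

lemma sum_zmod2 (F : ZMod 2 → ℝ) : ∑ c : ZMod 2, F c = F 0 + F 1 := by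
  exact Fin.sum_univ_two F

lemma chi_orth (n : ℕ) (z : Fin n → ZMod 2) :
    ∑ y : Fin n → ZMod 2, chi (∑ i, z i * y i)
      = if z = 0 then ((2 : ℝ) ^ n) else 0 := by
  classical
  have h1 : ∀ y : Fin n → ZMod 2, chi (∑ i, z i * y i) = ∏ i, chi (z i * y i) :=
    fun y => chi_sum _ _
  simp_rw [h1]
  rw [← Fintype.prod_sum (fun i c => chi (z i * c))]
  by_cases hz : z = 0
  · subst hz
    simp [sum_zmod2, chi_zero]
  · obtain ⟨i, hi⟩ : ∃ i, z i ≠ 0 := by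
      by_contra h; push_neg at h; exact hz (funext fun i => h i)
    have hzi : z i = 1 := by
      have : ∀ a : ZMod 2, a ≠ 0 → a = 1 := by decide
      exact this _ hi
    rw [if_neg hz]
    apply Finset.prod_eq_zero (Finset.mem_univ i)
    rw [sum_zmod2]
    norm_num [hzi, chi, show ((1 : ZMod 2) * 0) = 0 by decide,
      show ((1 : ZMod 2) * 1) = 1 by decide,
      show ZMod.val (0 : ZMod 2) = 0 from rfl, show ZMod.val (1 : ZMod 2) = 1 from rfl]

theorem stmt13 (n : ℕ) {H : Type} [NormedAddCommGroup H] [InnerProductSpace ℝ H]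
    (γ : ℝ) (hγ : 0 < γ)
    (α β : (Fin n → ZMod 2) → H)
    (hα : ∀ x, ‖α x‖ = 1) (hβ : ∀ y, ‖β y‖ = 1)
    (hmargin : ∀ x y,
      γ ≤ (-1 : ℝ) ^ (∑ i, x i * y i : ZMod 2).val * (inner ℝ (α x) (β y) : ℝ)) :
    γ ≤ (2 : ℝ) ^ (-(n : ℝ) / 2) := by
  classical
  set N : ℝ := (2 : ℝ) ^ n with hN
  have hNpos : 0 < N := by positivity
  have hcard : (Fintype.card (Fin n → ZMod 2) : ℝ) = N := by
    simp [hN]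
  -- the vectors v y
  set v : (Fin n → ZMod 2) → H :=
    fun y => ∑ x, chi (∑ i, x i * y i) • α x with hv
  have hvinner : ∀ y, (inner ℝ (v y) (β y) : ℝ)
      = ∑ x, chi (∑ i, x i * y i) * (inner ℝ (α x) (β y) : ℝ) := by
    intro y
    rw [hv, sum_inner]
    simp [real_inner_smul_left]
  -- lower bound
  have h1 : γ * (N * N) ≤ ∑ y, (inner ℝ (v y) (β y) : ℝ) := by
    have hterm : ∀ y, γ * N ≤ (inner ℝ (v y) (β y) : ℝ) := by
      intro y
      rw [hvinner]
      calc γ * N = ∑ _x : Fin n → ZMod 2, γ := by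
            rw [Finset.sum_const, nsmul_eq_mul, Finset.card_univ, hcard]; ring
        _ ≤ _ := Finset.sum_le_sum fun x _ => hmargin x y
    calc γ * (N * N) = ∑ _y : Fin n → ZMod 2, γ * N := by
          rw [Finset.sum_const, nsmul_eq_mul, Finset.card_univ, hcard]; ring
      _ ≤ _ := Finset.sum_le_sum fun y _ => hterm y
  -- Cauchy-Schwarz pointwise
  have h2 : ∑ y, (inner ℝ (v y) (β y) : ℝ) ≤ ∑ y, ‖v y‖ := by
    refine Finset.sum_le_sum fun y _ => ?_
    calc (inner ℝ (v y) (β y) : ℝ) ≤ ‖v y‖ * ‖β y‖ := real_inner_le_norm _ _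
      _ = ‖v y‖ := by rw [hβ y, mul_one]
  -- sum of squared norms
  have h3 : ∑ y, ‖v y‖ ^ 2 = N * N := by
    have hvy : ∀ y, ‖v y‖ ^ 2 = ∑ x, ∑ x',
        chi (∑ i, x i * y i) * chi (∑ i, x' i * y i) * (inner ℝ (α x) (α x') : ℝ) := by
      intro y
      rw [← real_inner_self_eq_norm_sq, hv, sum_inner]
      refine Finset.sum_congr rfl fun x _ => ?_
      rw [inner_sum]
      refine Finset.sum_congr rfl fun x' _ => ?_
      rw [real_inner_smul_left, real_inner_smul_right]; ring
    simp_rw [hvy]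
    rw [Finset.sum_comm]
    have key : ∀ x : Fin n → ZMod 2, ∑ y : Fin n → ZMod 2, ∑ x' : Fin n → ZMod 2,
        chi (∑ i, x i * y i) * chi (∑ i, x' i * y i) * (inner ℝ (α x) (α x') : ℝ)
        = N := by
      intro x
      rw [Finset.sum_comm]
      have horth : ∀ x' : Fin n → ZMod 2,
          ∑ y : Fin n → ZMod 2, chi (∑ i, x i * y i) * chi (∑ i, x' i * y i)
            = if x = x' then N else 0 := by
        intro x'
        have : ∀ y : Fin n → ZMod 2,
            chi (∑ i, x i * y i) * chi (∑ i, x' i * y i)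
              = chi (∑ i, (x + x') i * y i) := by
          intro y
          rw [← chi_add, ← Finset.sum_add_distrib]
          congr 1
          refine Finset.sum_congr rfl fun i _ => ?_
          simp [add_mul]
        simp_rw [this]
        rw [chi_orth]
        have heq : (x + x' = 0) ↔ x = x' := by
          constructor
          · intro h; funext i
            exact (zmod2_cases _ _).mp (congrFun h i)
          · intro h; subst h; funext i
            exact (zmod2_cases _ _).mpr rfl
        simp [heq, hN]
      have hswap : ∀ x' : Fin n → ZMod 2, ∑ y : Fin n → ZMod 2,
          chi (∑ i, x i * y i) * chi (∑ i, x' i * y i) * (inner ℝ (α x) (α x') : ℝ)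
          = (if x = x' then N else 0) * (inner ℝ (α x) (α x') : ℝ) := by
        intro x'
        rw [← Finset.sum_mul, horth x']
      simp_rw [hswap, ite_mul, zero_mul]
      rw [Finset.sum_ite_eq Finset.univ x (fun x' => N * (inner ℝ (α x) (α x') : ℝ))]
      simp [real_inner_self_eq_norm_sq, hα x]
    simp_rw [key]
    rw [Finset.sum_const, nsmul_eq_mul, Finset.card_univ, hcard]
  -- Cauchy-Schwarz on the sum
  have h4 : (∑ y, ‖v y‖) ^ 2 ≤ N * (N * N) := by
    have := Finset.sum_mul_sq_le_sq_mul_sq Finset.univ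
      (fun _ : Fin n → ZMod 2 => (1 : ℝ)) (fun y => ‖v y‖)
    simpa [h3, Finset.sum_const, nsmul_eq_mul, Finset.card_univ, hcard] using this
  -- combine
  have h5 : γ * (N * N) ≤ ∑ y, ‖v y‖ := h1.trans h2
  have h6 : (γ * (N * N)) ^ 2 ≤ N * (N * N) := by
    have h7 : (γ * (N * N)) ^ 2 ≤ (∑ y, ‖v y‖) ^ 2 := by
      apply pow_le_pow_left₀ (by positivity) h5
    exact h7.trans h4
  have hγ2 : γ ^ 2 ≤ N⁻¹ := by
    rw [show N⁻¹ = (N * N * N) / (N * N * N * N) by field_simp]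
    rw [le_div_iff₀ (by positivity)]
    nlinarith [h6]
  have hc : (0 : ℝ) < (2 : ℝ) ^ (-(n : ℝ) / 2) := Real.rpow_pos_of_pos (by norm_num) _
  have hcsq : ((2 : ℝ) ^ (-(n : ℝ) / 2)) ^ 2 = N⁻¹ := by
    rw [← Real.rpow_natCast ((2 : ℝ) ^ (-(n : ℝ) / 2)) 2, ← Real.rpow_mul (by norm_num)]
    rw [hN, ← Real.rpow_natCast 2 n, ← Real.rpow_neg (by norm_num)]
    norm_num
  have : γ ^ 2 ≤ ((2 : ℝ) ^ (-(n : ℝ) / 2)) ^ 2 := by rw [hcsq]; exact hγ2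
  exact (pow_le_pow_iff_left₀ hγ.le hc.le (by norm_num)).mp this
end
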